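/- Let ξ = exp(iπ/5) ∈ ℂ. The set Q₂(2) = {Σ_{j=0}^{9} m_j ξ^j : m₀, …, m₉ ∈ ℕ, Σ_{j=0}^{9} m_j ≤ 2}, i.e. the set of all sums of at most two 10th roots of unity, contains exactly 61 distinct points. -/

import Mathlib

/-!
Every point of Q₂(2) is `0`, a root `ξ ^ j`, or a sum `ξ ^ i + ξ ^ j`. The minimal polynomial of
`ξ` over `ℚ` is the cyclotomic polynomial `Φ₁₀` of degree 4, so `1, ξ, ξ², ξ³` are linearly
independent and `c ↦ ∑ cᵢ ξⁱ` embeds `ℤ⁴` into `ℂ`. Writing every `ξ ^ j` in these coordinates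
turns Q₂(2) into a finite set of integer vectors, whose 61 elements are counted by computation.
-/

/-- ξ = exp(iπ/5), a primitive 10th root of unity. -/
noncomputable def xi : ℂ := Complex.exp (Real.pi * Complex.I / 5)

/-- The H₂^aff-induced quasicrystal fragment with cut-off parameter n. -/
noncomputable def Q2 (n : ℕ) : Set ℂ :=
  {z : ℂ | ∃ m : Fin 10 → ℕ, (∑ j, m j) ≤ n ∧ z = ∑ j, (m j : ℂ) * xi ^ (j : ℕ)}

open Pointwise

section SumsOfAtMost

variable {ι M N : Type*} [Fintype ι] [AddCommMonoid M] [AddCommMonoid N]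

def sumsOfAtMost (v : ι → M) (n : ℕ) : Set M :=
  {z | ∃ m : ι → ℕ, ∑ j, m j ≤ n ∧ z = ∑ j, m j • v j}

variable (v : ι → M)

theorem zero_mem_sumsOfAtMost (n : ℕ) : 0 ∈ sumsOfAtMost v n :=
  ⟨0, by simp, by simp⟩

theorem sumsOfAtMost_zero : sumsOfAtMost v 0 = {0} := by
  refine Set.Subset.antisymm ?_ (Set.singleton_subset_iff.2 (zero_mem_sumsOfAtMost v 0))
  rintro z ⟨m, hm, rfl⟩
  have hm0 : ∀ j, m j = 0 := fun j =>
    Finset.sum_eq_zero_iff.1 (Nat.le_zero.1 hm) j (Finset.mem_univ j)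
  simp [hm0]

theorem add_mem_sumsOfAtMost_succ {n : ℕ} {z : M} (hz : z ∈ sumsOfAtMost v n) (i : ι) :
    z + v i ∈ sumsOfAtMost v (n + 1) := by
  classical
  obtain ⟨m, hm, rfl⟩ := hz
  refine ⟨m + Pi.single i 1, ?_, ?_⟩
  · simpa [Finset.sum_add_distrib] using hm
  · simp [add_smul, Finset.sum_add_distrib]

theorem sumsOfAtMost_succ (n : ℕ) :
    sumsOfAtMost v (n + 1) = insert 0 (sumsOfAtMost v n + Set.range v) := by
  classical
  ext z
  constructor
  · rintro ⟨m, hm, rfl⟩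
    by_cases hm0 : m = 0
    · simp [hm0]
    obtain ⟨i, hi⟩ : ∃ i, m i ≠ 0 := by simpa [funext_iff] using hm0
    -- remove one copy of `v i` from the sum
    obtain ⟨m', rfl⟩ : ∃ m' : ι → ℕ, m = m' + Pi.single i 1 := by
      refine ⟨m - Pi.single i 1, funext fun j => ?_⟩
      rcases eq_or_ne j i with rfl | hj
      · simp only [Pi.add_apply, Pi.sub_apply, Pi.single_eq_same]
        omega
      · simp [hj]
    refine Or.inr ⟨_, ⟨m', ?_, rfl⟩, v i, ⟨i, rfl⟩, ?_⟩
    · simpa [Finset.sum_add_distrib] using hm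
    · simp [add_smul, Finset.sum_add_distrib]
  · rintro (rfl | ⟨w, hw, _, ⟨i, rfl⟩, rfl⟩)
    · exact zero_mem_sumsOfAtMost v _
    · exact add_mem_sumsOfAtMost_succ v hw i

theorem sumsOfAtMost_two :
    sumsOfAtMost v 2 = insert 0 (Set.range v ∪ (Set.range v + Set.range v)) := by
  rw [sumsOfAtMost_succ, sumsOfAtMost_succ, sumsOfAtMost_zero]
  simp only [Set.insert_eq, Set.union_add, Set.singleton_add, zero_add, Set.image_id']

theorem sumsOfAtMost_comp {F : Type*} [FunLike F M N] [AddMonoidHomClass F M N] (f : F) (n : ℕ) :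
    sumsOfAtMost (f ∘ v) n = f '' sumsOfAtMost v n := by
  ext z
  simp [sumsOfAtMost, map_sum, map_nsmul, eq_comm]

end SumsOfAtMost

theorem xi_isPrimitiveRoot : IsPrimitiveRoot xi 10 := by
  convert Complex.isPrimitiveRoot_exp 10 (by norm_num) using 2
  rw [xi]
  push_cast
  ring_nf

theorem xi_pow_five : xi ^ 5 = -1 := by
  rw [xi, ← Complex.exp_nat_mul, ← Complex.exp_pi_mul_I]
  ring_nf

theorem xi_pow_four : xi ^ 4 = -1 + xi - xi ^ 2 + xi ^ 3 := by
  have hxi : xi + 1 ≠ 0 := fun h => xi_isPrimitiveRoot.pow_ne_one_of_pos_of_lt two_ne_zero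
    (by norm_num) (by rw [eq_neg_of_add_eq_zero_left h]; norm_num)
  have h : (xi + 1) * (xi ^ 4 + 1 - xi + xi ^ 2 - xi ^ 3) = 0 := by
    linear_combination xi_pow_five
  linear_combination (mul_eq_zero.1 h).resolve_left hxi

theorem linearIndependent_xi_pow : LinearIndependent ℤ fun i : Fin 4 => xi ^ (i : ℕ) := by
  have hdeg : (minpoly ℚ xi).natDegree = 4 := by
    rw [← Polynomial.cyclotomic_eq_minpoly_rat xi_isPrimitiveRoot (by norm_num),
      Polynomial.natDegree_cyclotomic]
    decide
  have h := linearIndependent_pow (K := ℚ) xi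
  rw [hdeg] at h
  exact h.restrict_scalars' ℤ

def xiCoords : Fin 10 → Fin 4 → ℤ :=
  ![![1, 0, 0, 0], ![0, 1, 0, 0], ![0, 0, 1, 0], ![0, 0, 0, 1], ![-1, 1, -1, 1],
    ![-1, 0, 0, 0], ![0, -1, 0, 0], ![0, 0, -1, 0], ![0, 0, 0, -1], ![1, -1, 1, -1]]

theorem xi_pow_eq_linearCombination_xiCoords (j : Fin 10) :
    xi ^ (j : ℕ) = Fintype.linearCombination ℤ (fun i : Fin 4 => xi ^ (i : ℕ)) (xiCoords j) := by
  rw [Fintype.linearCombination_apply, Fin.sum_univ_four]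
  fin_cases j <;> simp [xiCoords]
  · linear_combination xi_pow_four
  · linear_combination xi_pow_five
  · linear_combination xi * xi_pow_five
  · linear_combination xi ^ 2 * xi_pow_five
  · linear_combination xi ^ 3 * xi_pow_five
  · linear_combination xi ^ 4 * xi_pow_five - xi_pow_four

set_option maxRecDepth 20000 in
theorem ncard_sumsOfAtMost_xiCoords_two : (sumsOfAtMost xiCoords 2).ncard = 61 := by
  have hcoe : sumsOfAtMost xiCoords 2 = ↑(insert 0 (Finset.univ.image xiCoords ∪
      (Finset.univ.image xiCoords + Finset.univ.image xiCoords))) := by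
    rw [sumsOfAtMost_two]
    simp
  rw [hcoe, Set.ncard_coe_finset]
  decide

theorem Q2_eq_sumsOfAtMost (n : ℕ) :
    Q2 n = sumsOfAtMost (fun j : Fin 10 => xi ^ (j : ℕ)) n := by
  simp only [Q2, sumsOfAtMost, nsmul_eq_mul]

/-- The set Q₂(2) of all sums of at most two 10th roots of unity
contains exactly 61 points. -/
theorem Q2_two_card : Set.ncard (Q2 2) = 61 := by
  rw [Q2_eq_sumsOfAtMost, funext xi_pow_eq_linearCombination_xiCoords,
    ← Function.comp_def, sumsOfAtMost_comp,
    Set.ncard_image_of_injective _ linearIndependent_xi_pow.fintypeLinearCombination_injective,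
    ncard_sumsOfAtMost_xiCoords_two]
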